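/- arXiv:1805.01154 — 2 statements merged into one kernel-verified Lean document; each statement's English description precedes it below -/
import Mathlib

section
/- Let N ≥ 1 and let A : ℝ^N → ℝ^N be given by A(ξ) = A₀(|ξ|)ξ for ξ ≠ 0 and A(0) = 0, where A₀ : (0,∞) → (0,∞) is continuous with lim_{t→0⁺} t·A₀(t) = 0 (so A is continuous on ℝ^N). Assume A is continuously differentiable on ℝ^N \ {0} and that there is a function ϑ : (0,∞) → (0,∞) such that the derivative satisfies (D_ξA(ξ) y) · y ≥ (ϑ(|ξ|)/|ξ|)·|y|² for all ξ ∈ ℝ^N \ {0} and all y ∈ ℝ^N. Then A is strictly monotone: (A(ξ) − A(η)) · (ξ − η) > 0 for all ξ, η ∈ ℝ^N with ξ ≠ η. -/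
open Filter Set RealInnerProductSpace

/-!
Away from the origin the ellipticity condition makes `D_ξA` positive definite, so along a
segment `[η, ξ]` avoiding `0` the function `t ↦ ⟪A(η + t(ξ - η)), ξ - η⟫` has positive
derivative and the mean value theorem gives strict monotonicity. If the segment passes
through `0`, then `ξ` and `η` point in opposite directions, and since `A` is a positive
multiple of the identity on each ray, every cross term of `⟪A ξ - A η, ξ - η⟫` is
nonnegative and one diagonal term is positive.
-/

variable {E : Type*} [NormedAddCommGroup E] [InnerProductSpace ℝ E]

theorem inner_nonpos_of_zero_mem_segment {x y : E} (h : (0 : E) ∈ segment ℝ y x) :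
    ⟪x, y⟫ ≤ 0 := by
  obtain ⟨a, b, ha, hb, hab, hzero⟩ := h
  have hv : ∀ v, a * ⟪y, v⟫ + b * ⟪x, v⟫ = 0 := fun v => by
    rw [← real_inner_smul_left, ← real_inner_smul_left, ← inner_add_left, hzero,
      inner_zero_left]
  have hx := hv x
  have hy := hv y
  rw [real_inner_comm, real_inner_self_eq_norm_sq] at hx
  rw [real_inner_self_eq_norm_sq] at hy
  nlinarith [mul_nonneg ha (sq_nonneg ‖y‖), mul_nonneg hb (sq_nonneg ‖x‖)]

theorem inner_radial_sub_pos_of_inner_nonpos {φ : ℝ → ℝ} (hφ : ∀ t > 0, 0 < φ t)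
    {x y : E} (hne : x ≠ y) (hxy : ⟪x, y⟫ ≤ 0) :
    0 < ⟪φ ‖x‖ • x - φ ‖y‖ • y, x - y⟫ := by
  have hexpand : ⟪φ ‖x‖ • x - φ ‖y‖ • y, x - y⟫ =
      φ ‖x‖ * (‖x‖ ^ 2 - ⟪x, y⟫) + φ ‖y‖ * (‖y‖ ^ 2 - ⟪x, y⟫) := by
    simp only [inner_sub_left, inner_sub_right, real_inner_smul_left,
      real_inner_self_eq_norm_sq, real_inner_comm x y]
    ring
  rw [hexpand]
  rcases eq_or_ne x 0 with rfl | hx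
  · have hy : 0 < ‖y‖ := norm_pos_iff.mpr hne.symm
    simp only [norm_zero, inner_zero_left]
    nlinarith [mul_pos (hφ _ hy) (pow_pos hy 2)]
  rcases eq_or_ne y 0 with rfl | hy
  · have hx : 0 < ‖x‖ := norm_pos_iff.mpr hx
    simp only [norm_zero, inner_zero_right]
    nlinarith [mul_pos (hφ _ hx) (pow_pos hx 2)]
  have hx := norm_pos_iff.mpr hx
  have hy := norm_pos_iff.mpr hy
  nlinarith [hφ _ hx, hφ _ hy, mul_pos (hφ _ hx) (pow_pos hx 2), sq_nonneg ‖y‖]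

theorem inner_sub_pos_of_hasFDerivAt_of_inner_pos {f : E → E} {f' : E → E →L[ℝ] E}
    {x y : E} (hf : ∀ z ∈ segment ℝ y x, HasFDerivAt f (f' z) z)
    (hpos : ∀ z ∈ segment ℝ y x, 0 < ⟪f' z (x - y), x - y⟫) :
    0 < ⟪f x - f y, x - y⟫ := by
  set γ : ℝ → E := fun t => AffineMap.lineMap y x t
  have hγ : ∀ t ∈ Icc (0 : ℝ) 1, γ t ∈ segment ℝ y x := fun t ht =>
    lineMap_mem_segment ℝ y x ht
  have hderiv : ∀ t ∈ Icc (0 : ℝ) 1,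
      HasDerivAt (fun s => ⟪f (γ s), x - y⟫) ⟪f' (γ t) (x - y), x - y⟫ t := fun t ht =>
    (((hf _ (hγ t ht)).comp_hasDerivAt t AffineMap.hasDerivAt_lineMap).inner ℝ
      (hasDerivAt_const t (x - y))).congr_deriv (by simp)
  obtain ⟨c, hc, hslope⟩ := exists_hasDerivAt_eq_slope (fun s => ⟪f (γ s), x - y⟫) _
    zero_lt_one (fun t ht => (hderiv t ht).continuousAt.continuousWithinAt)
    (fun t ht => hderiv t (Ioo_subset_Icc_self ht))
  have hpos_c := hpos _ (hγ c (Ioo_subset_Icc_self hc))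
  simp only [γ, AffineMap.lineMap_apply_zero, AffineMap.lineMap_apply_one, sub_zero,
    div_one] at hslope
  rwa [hslope, ← inner_sub_left] at hpos_c

theorem stmt_1_general (N : ℕ)
    (A : EuclideanSpace ℝ (Fin N) → EuclideanSpace ℝ (Fin N))
    (A₀ : ℝ → ℝ) (hA₀pos : ∀ t > (0:ℝ), 0 < A₀ t)
    (hAdef : ∀ ξ : EuclideanSpace ℝ (Fin N), ξ ≠ 0 → A ξ = A₀ ‖ξ‖ • ξ)
    (hA0 : A 0 = 0)
    (A' : EuclideanSpace ℝ (Fin N) → (EuclideanSpace ℝ (Fin N) →L[ℝ] EuclideanSpace ℝ (Fin N)))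
    (hA' : ∀ ξ : EuclideanSpace ℝ (Fin N), ξ ≠ 0 → HasFDerivAt A (A' ξ) ξ)
    (ϑ : ℝ → ℝ) (hϑpos : ∀ t > (0:ℝ), 0 < ϑ t)
    (hell : ∀ ξ : EuclideanSpace ℝ (Fin N), ξ ≠ 0 →
      ∀ y : EuclideanSpace ℝ (Fin N), (ϑ ‖ξ‖ / ‖ξ‖) * ‖y‖ ^ 2 ≤ ⟪A' ξ y, y⟫) :
    ∀ ξ η : EuclideanSpace ℝ (Fin N), ξ ≠ η → 0 < ⟪A ξ - A η, ξ - η⟫ := by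
  intro ξ η hne
  have hA : ∀ ζ, A ζ = A₀ ‖ζ‖ • ζ := fun ζ => by
    rcases eq_or_ne ζ 0 with rfl | hζ
    · rw [hA0, smul_zero]
    · exact hAdef ζ hζ
  by_cases h0 : (0 : EuclideanSpace ℝ (Fin N)) ∈ segment ℝ η ξ
  · rw [hA ξ, hA η]
    exact inner_radial_sub_pos_of_inner_nonpos hA₀pos hne (inner_nonpos_of_zero_mem_segment h0)
  have hz : ∀ z ∈ segment ℝ η ξ, z ≠ 0 := fun z hz hz0 => h0 (hz0 ▸ hz)
  refine inner_sub_pos_of_hasFDerivAt_of_inner_pos (fun z hzs => hA' z (hz z hzs)) ?_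
  intro z hzs
  have hnz : 0 < ‖z‖ := norm_pos_iff.mpr (hz z hzs)
  have hnv : 0 < ‖ξ - η‖ := norm_pos_iff.mpr (sub_ne_zero.mpr hne)
  calc 0 < ϑ ‖z‖ / ‖z‖ * ‖ξ - η‖ ^ 2 := by have := hϑpos _ hnz; positivity
    _ ≤ ⟪A' z (ξ - η), ξ - η⟫ := hell z (hz z hzs) (ξ - η)

/-- A radial vector field `A(ξ) = A₀(|ξ|)ξ`, continuous on `ℝ^N`, `C¹` away from the
origin, whose derivative satisfies the ellipticity condition
`(D_ξA(ξ)y)·y ≥ (ϑ(|ξ|)/|ξ|)|y|²`, is strictly monotone. -/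
theorem stmt_1 (N : ℕ) (hN : 1 ≤ N)
    (A : EuclideanSpace ℝ (Fin N) → EuclideanSpace ℝ (Fin N))
    (A₀ : ℝ → ℝ) (hA₀pos : ∀ t > (0:ℝ), 0 < A₀ t)
    (hA₀cont : ContinuousOn A₀ (Ioi 0))
    (hA₀lim : Tendsto (fun t => t * A₀ t) (nhdsWithin 0 (Ioi 0)) (nhds 0))
    (hAdef : ∀ ξ : EuclideanSpace ℝ (Fin N), ξ ≠ 0 → A ξ = A₀ ‖ξ‖ • ξ)
    (hA0 : A 0 = 0) (hAcont : Continuous A)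
    (A' : EuclideanSpace ℝ (Fin N) → (EuclideanSpace ℝ (Fin N) →L[ℝ] EuclideanSpace ℝ (Fin N)))
    (hA' : ∀ ξ : EuclideanSpace ℝ (Fin N), ξ ≠ 0 → HasFDerivAt A (A' ξ) ξ)
    (hA'cont : ContinuousOn A' {(0 : EuclideanSpace ℝ (Fin N))}ᶜ)
    (ϑ : ℝ → ℝ) (hϑpos : ∀ t > (0:ℝ), 0 < ϑ t)
    (hell : ∀ ξ : EuclideanSpace ℝ (Fin N), ξ ≠ 0 →
      ∀ y : EuclideanSpace ℝ (Fin N), (ϑ ‖ξ‖ / ‖ξ‖) * ‖y‖ ^ 2 ≤ ⟪A' ξ y, y⟫) :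
    ∀ ξ η : EuclideanSpace ℝ (Fin N), ξ ≠ η → 0 < ⟪A ξ - A η, ξ - η⟫ :=
  stmt_1_general N A A₀ hA₀pos hAdef hA0 A' hA' ϑ hϑpos hell
end

section
/- Let Ω ⊂ ℝ^N (N > 1) be a bounded domain, let 1 ≤ p < p* be real numbers, let u : Ω → [0,∞) be measurable with ∫_Ω u^{p*} dx < ∞, let h > 0, κ ≥ 0, and set u_h = min{u, h}. Then for every L > 0: ∫_Ω u^{p*} u_h^{κp} dx ≤ L·∫_Ω (u·u_h^κ)^p dx + (∫_{{x ∈ Ω : u(x)^{p*−p} > L}} u^{p*} dx)^{(p*−p)/p*} · (∫_Ω (u·u_h^κ)^{p*} dx)^{p/p*}. -/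
/-!
Split `Ω` according to whether `u^{p*-p} ≤ L`. Writing the integrand as
`u^{p*-p} · (u u_h^κ)^p`, the part where `u^{p*-p} ≤ L` is bounded pointwise by `L (u u_h^κ)^p`,
and on the superlevel set Hölder's inequality with the exponents `p*/(p*-p)` and `p*/p`
gives the second term.
-/

open MeasureTheory Set

open scoped ENNReal

theorem Real.rpow_mul_rpow_mul_eq_rpow_sub_mul_mul_rpow {a m q : ℝ} (ha : 0 ≤ a) (hm : 0 ≤ m)
    (hq : q ≠ 0) (κ p : ℝ) : a ^ q * m ^ (κ * p) = a ^ (q - p) * (a * m ^ κ) ^ p := by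
  rw [Real.mul_rpow ha (Real.rpow_nonneg hm κ), ← Real.rpow_mul hm, ← mul_assoc,
    ← Real.rpow_add' ha (by rwa [sub_add_cancel]), sub_add_cancel]

namespace ENNReal

variable {α : Type*} [MeasurableSpace α] {μ : Measure α}

theorem lintegral_rpow_sub_mul_rpow_le {f g : α → ℝ≥0∞} (hf : AEMeasurable f μ)
    (hg : AEMeasurable g μ) {p q : ℝ} (hp : 0 ≤ p) (hpq : p ≤ q) (hq : 0 < q) :
    ∫⁻ x, f x ^ (q - p) * g x ^ p ∂μ ≤
      (∫⁻ x, f x ^ q ∂μ) ^ ((q - p) / q) * (∫⁻ x, g x ^ q ∂μ) ^ (p / q) := by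
  have hexp : ∀ (a : ℝ≥0∞) (r : ℝ), (a ^ q) ^ (r / q) = a ^ r := fun a r => by
    rw [← rpow_mul, mul_div_cancel₀ r hq.ne']
  simpa only [hexp] using lintegral_mul_norm_pow_le (hf.pow_const q) (hg.pow_const q)
    (div_nonneg (sub_nonneg.2 hpq) hq.le) (div_nonneg hp hq.le) (by field_simp; ring)

theorem setLIntegral_mul_le_mul_add_setLIntegral_lt {F G : α → ℝ≥0∞} (hF : Measurable F)
    (hG : AEMeasurable G μ) (s : Set α) (c : ℝ≥0∞) :
    ∫⁻ x in s, F x * G x ∂μ ≤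
      c * ∫⁻ x in s, G x ∂μ + ∫⁻ x in s ∩ {x | c < F x}, F x * G x ∂μ := by
  rw [← lintegral_inter_add_sdiff _ s (measurableSet_lt measurable_const hF), add_comm]
  gcongr
  calc ∫⁻ x in s \ {x | c < F x}, F x * G x ∂μ
      ≤ ∫⁻ x in s \ {x | c < F x}, c * G x ∂μ :=
        setLIntegral_mono_ae (hG.const_mul c).restrict <| ae_of_all _ fun x hx => by
          gcongr; exact not_lt.1 hx.2
    _ ≤ c * ∫⁻ x in s, G x ∂μ := by
        rw [lintegral_const_mul'' _ hG.restrict]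
        gcongr
        exact sdiff_subset

theorem setLIntegral_rpow_sub_mul_rpow_le {f g : α → ℝ≥0∞} (hf : Measurable f)
    (hg : AEMeasurable g μ) (s : Set α) (c : ℝ≥0∞) {p q : ℝ} (hp : 0 ≤ p) (hpq : p ≤ q)
    (hq : 0 < q) :
    ∫⁻ x in s, f x ^ (q - p) * g x ^ p ∂μ ≤
      c * ∫⁻ x in s, g x ^ p ∂μ +
        (∫⁻ x in s ∩ {x | c < f x ^ (q - p)}, f x ^ q ∂μ) ^ ((q - p) / q) *
          (∫⁻ x in s, g x ^ q ∂μ) ^ (p / q) := by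
  refine (setLIntegral_mul_le_mul_add_setLIntegral_lt (hf.pow_const _) (hg.pow_const p) s c).trans
    ?_
  gcongr
  refine (lintegral_rpow_sub_mul_rpow_le hf.aemeasurable.restrict hg.restrict hp hpq hq).trans ?_
  gcongr
  exact inter_subset_left

end ENNReal

theorem stmt_8_general (N : ℕ) (Ω : Set (EuclideanSpace ℝ (Fin N)))
    (p ps : ℝ) (hp : 1 ≤ p) (hpps : p < ps)
    (u : EuclideanSpace ℝ (Fin N) → ℝ) (hmeas : Measurable u) (hu0 : ∀ x, 0 ≤ u x)
    (h : ℝ) (hh : 0 < h) (κ : ℝ) (L : ℝ) :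
    (∫⁻ x in Ω, ENNReal.ofReal (u x ^ ps * (min (u x) h) ^ (κ * p))) ≤
      ENNReal.ofReal L * (∫⁻ x in Ω, ENNReal.ofReal ((u x * (min (u x) h) ^ κ) ^ p)) +
        (∫⁻ x in {x | x ∈ Ω ∧ L < u x ^ (ps - p)}, ENNReal.ofReal (u x ^ ps)) ^ ((ps - p) / ps) *
          (∫⁻ x in Ω, ENNReal.ofReal ((u x * (min (u x) h) ^ κ) ^ ps)) ^ (p / ps) := by
  have hp0 : 0 ≤ p := zero_le_one.trans hp
  have hps0 : 0 < ps := hp0.trans_lt hpps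
  have hm0 : ∀ x, 0 ≤ min (u x) h := fun x => le_min (hu0 x) hh.le
  have hv0 : ∀ x, 0 ≤ u x * min (u x) h ^ κ := fun x =>
    mul_nonneg (hu0 x) (Real.rpow_nonneg (hm0 x) κ)
  have hfactor : ∀ x, ENNReal.ofReal (u x ^ ps * min (u x) h ^ (κ * p)) =
      ENNReal.ofReal (u x) ^ (ps - p) * ENNReal.ofReal (u x * min (u x) h ^ κ) ^ p := fun x => by
    rw [Real.rpow_mul_rpow_mul_eq_rpow_sub_mul_mul_rpow (hu0 x) (hm0 x) hps0.ne',
      ENNReal.ofReal_mul (Real.rpow_nonneg (hu0 x) _),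
      ENNReal.ofReal_rpow_of_nonneg (hu0 x) (sub_nonneg.2 hpps.le),
      ENNReal.ofReal_rpow_of_nonneg (hv0 x) hp0]
  have hsuperlevel : Ω ∩ {x | ENNReal.ofReal L < ENNReal.ofReal (u x) ^ (ps - p)} ⊆
      {x | x ∈ Ω ∧ L < u x ^ (ps - p)} := fun x ⟨hxΩ, hx⟩ => by
    rw [mem_ofPred_eq, ENNReal.ofReal_rpow_of_nonneg (hu0 x) (sub_nonneg.2 hpps.le),
      ENNReal.ofReal_lt_ofReal_iff'] at hx
    exact ⟨hxΩ, hx.1⟩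
  calc _ = ∫⁻ x in Ω, ENNReal.ofReal (u x) ^ (ps - p) *
          ENNReal.ofReal (u x * min (u x) h ^ κ) ^ p := lintegral_congr hfactor
    _ ≤ _ := ENNReal.setLIntegral_rpow_sub_mul_rpow_le (by fun_prop) (by fun_prop) Ω _ hp0
          hpps.le hps0
    _ ≤ _ := by
      simp only [ENNReal.ofReal_rpow_of_nonneg (hu0 _) hps0.le,
        ENNReal.ofReal_rpow_of_nonneg (hv0 _) hps0.le, ENNReal.ofReal_rpow_of_nonneg (hv0 _) hp0]
      gcongr

/-- The splitting/Hölder estimate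
`∫_Ω u^{p*} u_h^{κp} ≤ L ∫_Ω (u u_h^κ)^p + (∫_{{u^{p*-p}>L}} u^{p*})^{(p*-p)/p*} (∫_Ω (u u_h^κ)^{p*})^{p/p*}`
for the truncation `u_h = min{u, h}`, with all quantities allowed to be `+∞`. -/
theorem stmt_8 (N : ℕ) (hN : 1 < N) (Ω : Set (EuclideanSpace ℝ (Fin N)))
    (hΩopen : IsOpen Ω) (hΩconn : IsConnected Ω) (hΩbdd : Bornology.IsBounded Ω)
    (p ps : ℝ) (hp : 1 ≤ p) (hpps : p < ps)
    (u : EuclideanSpace ℝ (Fin N) → ℝ) (hmeas : Measurable u) (hu0 : ∀ x, 0 ≤ u x)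
    (hfin : (∫⁻ x in Ω, ENNReal.ofReal (u x ^ ps)) < ⊤)
    (h : ℝ) (hh : 0 < h) (κ : ℝ) (hκ : 0 ≤ κ) (L : ℝ) (hL : 0 < L) :
    (∫⁻ x in Ω, ENNReal.ofReal (u x ^ ps * (min (u x) h) ^ (κ * p))) ≤
      ENNReal.ofReal L * (∫⁻ x in Ω, ENNReal.ofReal ((u x * (min (u x) h) ^ κ) ^ p)) +
        (∫⁻ x in {x | x ∈ Ω ∧ L < u x ^ (ps - p)}, ENNReal.ofReal (u x ^ ps)) ^ ((ps - p) / ps) *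
          (∫⁻ x in Ω, ENNReal.ofReal ((u x * (min (u x) h) ^ κ) ^ ps)) ^ (p / ps) :=
  stmt_8_general N Ω p ps hp hpps u hmeas hu0 h hh κ L
end
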